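/- Assume σ(t) ≠ 0 for all t in [a,b]. Then the total curvature of the evolute equals the total absolute torsion of ξ, and the total torsion of the evolute equals the total curvature of ξ taken with the sign of σ: ∫ₐᵇ (‖e' × e''‖/‖e'‖³)·‖e'‖ dt = ∫ₐᵇ |τ| dt and ∫ₐᵇ (det(e', e'', e''')/‖e' × e''‖²)·‖e'‖ dt = ∫ₐᵇ sgn(σ)·k dt. -/

import Mathlib

open scoped RealInnerProductSpace
open scoped ContDiff

noncomputable section

/-- The determinant of the 3×3 matrix with rows `u`, `v`, `w`. -/
def det3 (u v w : EuclideanSpace ℝ (Fin 3)) : ℝ :=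
  u 0 * (v 1 * w 2 - v 2 * w 1) - u 1 * (v 0 * w 2 - v 2 * w 0)
    + u 2 * (v 0 * w 1 - v 1 * w 0)

/-- The cross product of two vectors in `ℝ³`. -/
def cross3 (u v : EuclideanSpace ℝ (Fin 3)) : EuclideanSpace ℝ (Fin 3) :=
  (WithLp.equiv 2 (Fin 3 → ℝ)).symm
    ![u 1 * v 2 - u 2 * v 1, u 2 * v 0 - u 0 * v 2, u 0 * v 1 - u 1 * v 0]

/-! ### Auxiliary algebraic lemmas -/

lemma inner3 (u v : EuclideanSpace ℝ (Fin 3)) :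
    ⟪u,v⟫ = u 0 * v 0 + u 1 * v 1 + u 2 * v 2 := by
  simp [PiLp.inner_apply, Fin.sum_univ_three]; ring

lemma ext3 {u v : EuclideanSpace ℝ (Fin 3)} (h0 : u 0 = v 0) (h1 : u 1 = v 1) (h2 : u 2 = v 2) :
    u = v := by
  ext i; fin_cases i <;> assumption

section crossalg
variable (a c : ℝ) (u v x y : EuclideanSpace ℝ (Fin 3))

lemma smul_app (i : Fin 3) : (a • u) i = a * u i := rfl
lemma add_app (i : Fin 3) : (u + v) i = u i + v i := rfl
lemma sub_app (i : Fin 3) : (u - v) i = u i - v i := rfl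
lemma cross0 : cross3 u v 0 = u 1 * v 2 - u 2 * v 1 := rfl
lemma cross1 : cross3 u v 1 = u 2 * v 0 - u 0 * v 2 := rfl
lemma cross2 : cross3 u v 2 = u 0 * v 1 - u 1 * v 0 := rfl

lemma cross3_comb_left : cross3 (a • u + c • v) x = a • cross3 u x + c • cross3 v x := by
  apply ext3 <;> simp only [cross0, cross1, cross2, smul_app, add_app] <;> ring

lemma cross3_comb_right : cross3 x (a • u + c • v) = a • cross3 x u + c • cross3 x v := by
  apply ext3 <;> simp only [cross0, cross1, cross2, smul_app, add_app] <;> ring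

lemma cross3_smul_left : cross3 (a • u) v = a • cross3 u v := by
  apply ext3 <;> simp only [cross0, cross1, cross2, smul_app] <;> ring

lemma cross3_smul_right : cross3 u (a • v) = a • cross3 u v := by
  apply ext3 <;> simp only [cross0, cross1, cross2, smul_app] <;> ring

lemma cross3_self : cross3 u u = 0 := by
  apply ext3 <;> simp only [cross0, cross1, cross2] <;> simp <;> ring

lemma cross3_triple_left : cross3 u (cross3 u v) = ⟪u,v⟫ • u - ⟪u,u⟫ • v := by
  apply ext3 <;> simp only [cross0, cross1, cross2, smul_app, sub_app, inner3] <;> ring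

lemma cross3_triple_right : cross3 (cross3 u v) v = ⟪u,v⟫ • v - ⟪v,v⟫ • u := by
  apply ext3 <;> simp only [cross0, cross1, cross2, smul_app, sub_app, inner3] <;> ring

lemma det3_eq : det3 u v x = ⟪cross3 u v, x⟫ := by
  simp only [det3, inner3, cross0, cross1, cross2]; ring

lemma inner_cross_left : ⟪cross3 u v, u⟫ = 0 := by
  simp only [inner3, cross0, cross1, cross2]; ring

lemma inner_cross_right : ⟪cross3 u v, v⟫ = 0 := by
  simp only [inner3, cross0, cross1, cross2]; ring

lemma norm_sq_eq_inner3 : ‖u‖ ^ 2 = ⟪u,u⟫ := (real_inner_self_eq_norm_sq u).symm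

lemma cross3_lagrange : ⟪cross3 u v, cross3 u v⟫ = ⟪u,u⟫ * ⟪v,v⟫ - ⟪u,v⟫ ^ 2 := by
  simp only [inner3, cross0, cross1, cross2]; ring

end crossalg

/-! ### Orthonormal expansion -/

lemma ortho_sum {u v : EuclideanSpace ℝ (Fin 3)}
    (hu : ⟪u,u⟫ = 1) (hv : ⟪v,v⟫ = 1) (huv : ⟪u,v⟫ = 0) (i j : Fin 3) :
    u i * u j + v i * v j + cross3 u v i * cross3 u v j = if i = j then 1 else 0 := by
  rw [inner3] at hu hv huv
  set w := cross3 u v with hw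
  have w0 : w 0 = u 1 * v 2 - u 2 * v 1 := rfl
  have w1 : w 1 = u 2 * v 0 - u 0 * v 2 := rfl
  have w2 : w 2 = u 0 * v 1 - u 1 * v 0 := rfl
  set M : Matrix (Fin 3) (Fin 3) ℝ := Matrix.of (fun i j => ![u, v, w] i j) with hMdef
  have key : ∀ p q : Fin 3, (M * M.transpose) p q
      = M p 0 * M q 0 + M p 1 * M q 1 + M p 2 * M q 2 := by
    intro p q; simp [Matrix.mul_apply, Fin.sum_univ_three]
  have hM : M * M.transpose = 1 := by
    ext p q
    rw [key]
    fin_cases p <;> fin_cases q <;>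
      norm_num [hMdef, Matrix.one_apply, w0, w1, w2, Fin.ext_iff]
    · linarith
    · linarith
    · ring
    · linarith
    · linarith
    · ring
    · ring
    · ring
    · linear_combination (v 0 * v 0 + v 1 * v 1 + v 2 * v 2) * hu + hv
        - (u 0 * v 0 + u 1 * v 1 + u 2 * v 2) * huv
  have hM2 : M.transpose * M = 1 := mul_eq_one_comm.mp hM
  have key2 : ∀ p q : Fin 3, (M.transpose * M) p q
      = M 0 p * M 0 q + M 1 p * M 1 q + M 2 p * M 2 q := by
    intro p q; simp [Matrix.mul_apply, Fin.sum_univ_three]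
  have h := (key2 i j).symm.trans (by rw [hM2])
  have e0 : M 0 i = u i := rfl
  have e1 : M 1 i = v i := rfl
  have e2 : M 2 i = w i := rfl
  have e0' : M 0 j = u j := rfl
  have e1' : M 1 j = v j := rfl
  have e2' : M 2 j = w j := rfl
  rw [e0, e1, e2, e0', e1', e2'] at h
  rw [h]
  simp [Matrix.one_apply]

lemma ortho_expand {u v : EuclideanSpace ℝ (Fin 3)}
    (hu : ⟪u,u⟫ = 1) (hv : ⟪v,v⟫ = 1) (huv : ⟪u,v⟫ = 0) (x : EuclideanSpace ℝ (Fin 3)) :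
    x = ⟪x,u⟫ • u + ⟪x,v⟫ • v + ⟪x, cross3 u v⟫ • cross3 u v := by
  have h00 := ortho_sum hu hv huv 0 0
  have h01 := ortho_sum hu hv huv 0 1
  have h02 := ortho_sum hu hv huv 0 2
  have h11 := ortho_sum hu hv huv 1 1
  have h12 := ortho_sum hu hv huv 1 2
  have h22 := ortho_sum hu hv huv 2 2
  norm_num [show (0:Fin 3) ≠ 2 by decide, show (1:Fin 3) ≠ 2 by decide] at h00 h01 h02 h11 h12 h22
  apply ext3 <;>
    simp only [PiLp.add_apply, PiLp.smul_apply, smul_eq_mul, inner3] <;>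
    [linear_combination (-(x 0 * h00) - x 1 * h01 - x 2 * h02);
     linear_combination (-(x 0 * h01) - x 1 * h11 - x 2 * h12);
     linear_combination (-(x 0 * h02) - x 1 * h12 - x 2 * h22)]

/-! ### Derivative helpers -/

lemma hasDerivAt_proj {f : ℝ → EuclideanSpace ℝ (Fin 3)} {v : EuclideanSpace ℝ (Fin 3)} {t : ℝ}
    (h : HasDerivAt f v t) (i : Fin 3) : HasDerivAt (fun s => f s i) (v i) t := by
  have := (EuclideanSpace.proj i (𝕜 := ℝ)).hasFDerivAt.comp_hasDerivAt t h
  exact this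

lemma hasDerivAt_ofproj {f : ℝ → EuclideanSpace ℝ (Fin 3)} {v : EuclideanSpace ℝ (Fin 3)} {t : ℝ}
    (h : ∀ i, HasDerivAt (fun s => f s i) (v i) t) : HasDerivAt f v t := by
  have h2 : HasDerivAt (fun s => (WithLp.equiv 2 (Fin 3 → ℝ)) (f s)) (WithLp.equiv 2 (Fin 3 → ℝ) v) t :=
    hasDerivAt_pi.2 h
  have := ((EuclideanSpace.equiv (Fin 3) ℝ).symm.hasFDerivAt).comp_hasDerivAt t h2
  exact this

lemma hasDerivAt_cross {f g : ℝ → EuclideanSpace ℝ (Fin 3)} {f' g' : EuclideanSpace ℝ (Fin 3)} {t : ℝ}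
    (hf : HasDerivAt f f' t) (hg : HasDerivAt g g' t) :
    HasDerivAt (fun s => cross3 (f s) (g s)) (cross3 f' (g t) + cross3 (f t) g') t := by
  apply hasDerivAt_ofproj
  intro i
  fin_cases i
  · have : HasDerivAt (fun s => f s 1 * g s 2 - f s 2 * g s 1)
      ((f' 1 * g t 2 - f' 2 * g t 1) + (f t 1 * g' 2 - f t 2 * g' 1)) t := by
      have := (((hasDerivAt_proj hf 1).mul (hasDerivAt_proj hg 2)).sub
        ((hasDerivAt_proj hf 2).mul (hasDerivAt_proj hg 1)))
      refine this.congr_deriv ?_; ring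
    exact this
  · have : HasDerivAt (fun s => f s 2 * g s 0 - f s 0 * g s 2)
      ((f' 2 * g t 0 - f' 0 * g t 2) + (f t 2 * g' 0 - f t 0 * g' 2)) t := by
      have := (((hasDerivAt_proj hf 2).mul (hasDerivAt_proj hg 0)).sub
        ((hasDerivAt_proj hf 0).mul (hasDerivAt_proj hg 2)))
      refine this.congr_deriv ?_; ring
    exact this
  · have : HasDerivAt (fun s => f s 0 * g s 1 - f s 1 * g s 0)
      ((f' 0 * g t 1 - f' 1 * g t 0) + (f t 0 * g' 1 - f t 1 * g' 0)) t := by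
      have := (((hasDerivAt_proj hf 0).mul (hasDerivAt_proj hg 1)).sub
        ((hasDerivAt_proj hf 1).mul (hasDerivAt_proj hg 0)))
      refine this.congr_deriv ?_; ring
    exact this

theorem stmt_6
    (ξ : ℝ → EuclideanSpace ℝ (Fin 3))
    (hξ : ContDiff ℝ (⊤ : ℕ∞) ξ)
    (hunit : ∀ t, ‖deriv ξ t‖ = 1)
    (k τ r : ℝ → ℝ) (N B : ℝ → EuclideanSpace ℝ (Fin 3))
    (hk : ∀ t, k t = ‖deriv (deriv ξ) t‖)
    (hkpos : ∀ t, 0 < k t)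
    (hN : ∀ t, N t = (k t)⁻¹ • deriv (deriv ξ) t)
    (hB : ∀ t, B t = cross3 (deriv ξ t) (N t))
    (hτ : ∀ t, τ t = det3 (deriv ξ t) (deriv (deriv ξ) t) (deriv (deriv (deriv ξ)) t) / (k t) ^ 2)
    (hτne : ∀ t, τ t ≠ 0)
    (hr : ∀ t, r t = (k t)⁻¹)
    (e : ℝ → EuclideanSpace ℝ (Fin 3))
    (he : ∀ t, e t = ξ t + r t • N t + (deriv r t / τ t) • B t)
    (σ : ℝ → ℝ)
    (hσ : ∀ t, σ t = r t * τ t + deriv (fun s => deriv r s / τ s) t)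
    (a b : ℝ) (hab : a ≤ b)
    (hσne : ∀ t ∈ Set.Icc a b, σ t ≠ 0) :
    (∫ t in a..b,
        (‖cross3 (deriv e t) (deriv (deriv e) t)‖ / ‖deriv e t‖ ^ 3) * ‖deriv e t‖) =
      (∫ t in a..b, |τ t|) ∧
    (∫ t in a..b,
        (det3 (deriv e t) (deriv (deriv e) t) (deriv (deriv (deriv e)) t) /
          ‖cross3 (deriv e t) (deriv (deriv e) t)‖ ^ 2) * ‖deriv e t‖) =
      (∫ t in a..b, Real.sign (σ t) * k t) := by
  classical
  have hle : (∞ : WithTop ℕ∞) ≠ 0 := by simp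
  have hξ' : ContDiff ℝ ∞ ξ := hξ.of_le (by simp)
  have cT : ContDiff ℝ ∞ (deriv ξ) := (contDiff_infty_iff_deriv.mp hξ').2
  have cA : ContDiff ℝ ∞ (deriv (deriv ξ)) := (contDiff_infty_iff_deriv.mp cT).2
  have cA' : ContDiff ℝ ∞ (deriv (deriv (deriv ξ))) := (contDiff_infty_iff_deriv.mp cA).2
  set T := deriv ξ with hTdef
  set A := deriv T with hAdef
  set A' := deriv A with hA'def
  have hkne : ∀ t, k t ≠ 0 := fun t => ne_of_gt (hkpos t)
  have hAne : ∀ t, A t ≠ 0 := by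
    intro t h
    have := hkpos t
    rw [hk t, h, norm_zero] at this
    exact lt_irrefl 0 this
  have ck : ContDiff ℝ ∞ k := by
    rw [show k = fun t => ‖A t‖ from funext hk]
    exact contDiff_iff_contDiffAt.2 fun t => (cA.contDiffAt).norm ℝ (hAne t)
  have comp : ∀ (f : ℝ → EuclideanSpace ℝ (Fin 3)), ContDiff ℝ ∞ f →
      ∀ i, ContDiff ℝ ∞ (fun t => f t i) := fun f hf i => contDiff_euclidean.mp hf i
  have cN : ContDiff ℝ ∞ N := by
    rw [show N = fun t => (k t)⁻¹ • A t from funext hN]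
    exact (ck.inv hkne).smul cA
  have cB : ContDiff ℝ ∞ B := by
    rw [show B = fun t => cross3 (T t) (N t) from funext hB]
    apply contDiff_euclidean.2
    intro i
    fin_cases i
    · exact ((comp _ cT 1).mul (comp _ cN 2)).sub ((comp _ cT 2).mul (comp _ cN 1))
    · exact ((comp _ cT 2).mul (comp _ cN 0)).sub ((comp _ cT 0).mul (comp _ cN 2))
    · exact ((comp _ cT 0).mul (comp _ cN 1)).sub ((comp _ cT 1).mul (comp _ cN 0))
  have cdet : ContDiff ℝ ∞ (fun t => det3 (T t) (A t) (A' t)) := by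
    simp only [det3]
    exact (((comp _ cT 0).mul (((comp _ cA 1).mul (comp _ cA' 2)).sub
        ((comp _ cA 2).mul (comp _ cA' 1)))).sub
      ((comp _ cT 1).mul (((comp _ cA 0).mul (comp _ cA' 2)).sub
        ((comp _ cA 2).mul (comp _ cA' 0))))).add
      ((comp _ cT 2).mul (((comp _ cA 0).mul (comp _ cA' 1)).sub
        ((comp _ cA 1).mul (comp _ cA' 0))))
  have cτ : ContDiff ℝ ∞ τ := by
    rw [show τ = fun t => det3 (T t) (A t) (A' t) / k t ^ 2 from funext hτ]
    exact cdet.div (ck.pow 2) fun t => pow_ne_zero 2 (hkne t)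
  have cr : ContDiff ℝ ∞ r := by
    rw [show r = fun t => (k t)⁻¹ from funext hr]
    exact ck.inv hkne
  have cr' : ContDiff ℝ ∞ (deriv r) := (contDiff_infty_iff_deriv.mp cr).2
  set ρ : ℝ → ℝ := fun s => deriv r s / τ s with hρdef
  have cρ : ContDiff ℝ ∞ ρ := cr'.div cτ hτne
  have cρ' : ContDiff ℝ ∞ (deriv ρ) := (contDiff_infty_iff_deriv.mp cρ).2
  have cσ : ContDiff ℝ ∞ σ := by
    rw [show σ = fun t => r t * τ t + deriv ρ t from funext hσ]
    exact (cr.mul cτ).add cρ'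
  have cσ' : ContDiff ℝ ∞ (deriv σ) := (contDiff_infty_iff_deriv.mp cσ).2
  -- derivative producers
  have hdT : ∀ t, HasDerivAt ξ (T t) t := fun t => (hξ'.differentiable hle t).hasDerivAt
  have hdA : ∀ t, HasDerivAt T (A t) t := fun t => (cT.differentiable hle t).hasDerivAt
  have hdA' : ∀ t, HasDerivAt A (A' t) t := fun t => (cA.differentiable hle t).hasDerivAt
  have hdk : ∀ t, HasDerivAt k (deriv k t) t := fun t => (ck.differentiable hle t).hasDerivAt
  have hdr : ∀ t, HasDerivAt r (deriv r t) t := fun t => (cr.differentiable hle t).hasDerivAt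
  have hdρ : ∀ t, HasDerivAt ρ (deriv ρ t) t := fun t => (cρ.differentiable hle t).hasDerivAt
  have hdσ : ∀ t, HasDerivAt σ (deriv σ t) t := fun t => (cσ.differentiable hle t).hasDerivAt
  have hdσ' : ∀ t, HasDerivAt (deriv σ) (deriv (deriv σ) t) t :=
    fun t => (cσ'.differentiable hle t).hasDerivAt
  have hdτ : ∀ t, HasDerivAt τ (deriv τ t) t := fun t => (cτ.differentiable hle t).hasDerivAt
  -- frame identities
  have hTT : ∀ t, ⟪T t, T t⟫ = 1 := by
    intro t; rw [← norm_sq_eq_inner3, hunit t]; norm_num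
  have hAT : ∀ t, ⟪A t, T t⟫ = 0 := by
    intro t
    have h2 : HasDerivAt (fun s => ⟪T s, T s⟫) (⟪T t, A t⟫ + ⟪A t, T t⟫) t :=
      (hdA t).inner ℝ (hdA t)
    have h3 : HasDerivAt (fun s => ⟪T s, T s⟫) 0 t := by
      rw [funext hTT]; exact hasDerivAt_const t 1
    have h4 := h2.unique h3
    have h5 : ⟪T t, A t⟫ = ⟪A t, T t⟫ := real_inner_comm _ _
    linarith
  have hNN : ∀ t, ⟪N t, N t⟫ = 1 := by
    intro t
    rw [hN t, real_inner_smul_left, real_inner_smul_right, ← norm_sq_eq_inner3, ← hk t]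
    field_simp [hkne t] <;> ring
  have hTN : ∀ t, ⟪T t, N t⟫ = 0 := by
    intro t
    rw [hN t, real_inner_smul_right,
      show ⟪T t, A t⟫ = 0 from (real_inner_comm _ _).trans (hAT t), mul_zero]
  have hkN : ∀ t, k t • N t = A t := by
    intro t; rw [hN t, smul_smul, mul_inv_cancel₀ (hkne t), one_smul]
  have hBB : ∀ t, ⟪B t, B t⟫ = 1 := by
    intro t; rw [hB t, cross3_lagrange, hTT, hNN, hTN]; norm_num
  have hBT : ∀ t, ⟪B t, T t⟫ = 0 := fun t => by rw [hB t]; exact inner_cross_left _ _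
  have hBN : ∀ t, ⟪B t, N t⟫ = 0 := fun t => by rw [hB t]; exact inner_cross_right _ _
  have hTB : ∀ t, ⟪T t, B t⟫ = 0 := fun t => (real_inner_comm _ _).trans (hBT t)
  have hNB : ∀ t, ⟪N t, B t⟫ = 0 := fun t => (real_inner_comm _ _).trans (hBN t)
  have hnB : ∀ t, ‖B t‖ = 1 := by
    intro t
    have h1 : ‖B t‖ ^ 2 = 1 := by rw [norm_sq_eq_inner3]; exact hBB t
    have h2 : (‖B t‖ - 1) * (‖B t‖ + 1) = 0 := by nlinarith [h1]
    rcases mul_eq_zero.mp h2 with h | h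
    · linarith
    · have := norm_nonneg (B t); linarith
  have hAA : ∀ t, ⟪A t, A t⟫ = k t ^ 2 := by
    intro t; rw [← norm_sq_eq_inner3, hk t]
  have hA'T : ∀ t, ⟪A' t, T t⟫ = -(k t ^ 2) := by
    intro t
    have h2 : HasDerivAt (fun s => ⟪A s, T s⟫) (⟪A t, A t⟫ + ⟪A' t, T t⟫) t :=
      (hdA' t).inner ℝ (hdA t)
    have h3 : HasDerivAt (fun s => ⟪A s, T s⟫) 0 t := by
      rw [funext hAT]; exact hasDerivAt_const t 0
    have h4 := h2.unique h3
    have h5 := hAA t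
    linarith
  have hA'A : ∀ t, ⟪A' t, A t⟫ = k t * deriv k t := by
    intro t
    have h2 : HasDerivAt (fun s => ⟪A s, A s⟫) (⟪A t, A' t⟫ + ⟪A' t, A t⟫) t :=
      (hdA' t).inner ℝ (hdA' t)
    have h3 : HasDerivAt (fun s => ⟪A s, A s⟫) (2 * k t * deriv k t) t := by
      rw [funext hAA]
      have := (hdk t).pow 2
      refine this.congr_deriv ?_; norm_num
    have h4 := h2.unique h3
    have h5 : ⟪A t, A' t⟫ = ⟪A' t, A t⟫ := real_inner_comm _ _
    linarith
  have hA'N : ∀ t, ⟪A' t, N t⟫ = deriv k t := by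
    intro t
    rw [hN t, real_inner_smul_right, hA'A t]
    field_simp [hkne t] <;> ring
  have hBA' : ∀ t, ⟪B t, A' t⟫ = k t * τ t := by
    intro t
    have h1 : cross3 (T t) (A t) = k t • B t := by
      rw [← hkN t, cross3_smul_right, hB t]
    have h2 := hτ t
    rw [det3_eq, h1, real_inner_smul_left] at h2
    have h4 : k t * ⟪B t, A' t⟫ = τ t * k t ^ 2 :=
      (div_eq_iff (pow_ne_zero 2 (hkne t))).mp h2.symm
    have h5 : k t * ⟪B t, A' t⟫ = k t * (k t * τ t) := by linear_combination h4
    exact mul_left_cancel₀ (hkne t) h5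
  have hA'B : ∀ t, ⟪A' t, B t⟫ = k t * τ t :=
    fun t => (real_inner_comm _ _).trans (hBA' t)
  have hA'exp : ∀ t, A' t = (-(k t ^ 2)) • T t + deriv k t • N t + (k t * τ t) • B t := by
    intro t
    have h := ortho_expand (hTT t) (hNN t) (hTN t) (A' t)
    rw [← hB t, hA'T t, hA'N t, hA'B t] at h
    exact h
  -- Frenet derivatives
  have hdN : ∀ t, HasDerivAt N ((-(k t)) • T t + τ t • B t) t := by
    intro t
    have h1 : HasDerivAt (fun s => (k s)⁻¹) (-(deriv k t) / k t ^ 2) t := (hdk t).inv (hkne t)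
    have h2 : HasDerivAt (fun s => (k s)⁻¹ • A s)
        ((k t)⁻¹ • A' t + (-(deriv k t) / k t ^ 2) • A t) t := h1.smul (hdA' t)
    rw [show N = fun s => (k s)⁻¹ • A s from funext hN]
    convert h2 using 1
    rw [hA'exp t, ← hkN t]
    match_scalars <;> field_simp [hkne t] <;> ring
  have hdB : ∀ t, HasDerivAt B ((-(τ t)) • N t) t := by
    intro t
    have h2 := hasDerivAt_cross (hdA t) (hdN t)
    rw [show B = fun s => cross3 (T s) (N s) from funext hB]
    convert h2 using 1
    have h3 : cross3 (A t) (N t) = 0 := by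
      rw [← hkN t, cross3_smul_left, cross3_self, smul_zero]
    have h4 : cross3 (T t) ((-(k t)) • T t + τ t • B t) = (-(τ t)) • N t := by
      rw [cross3_comb_right, cross3_self, hB t, cross3_triple_left, hTN t, hTT t]
      module
    rw [h3, h4, zero_add]
  -- the evolute and its derivatives
  have hρτ : ∀ t, ρ t * τ t = deriv r t := by
    intro t
    show (deriv r t / τ t) * τ t = deriv r t
    field_simp [hτne t]
  have hrk : ∀ t, r t * k t = 1 := by
    intro t; rw [hr t]; field_simp [hkne t]
  have hρap : ∀ s, ρ s = deriv r s / τ s := fun s => rfl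
  clear_value ρ
  have he' : ∀ t, HasDerivAt e (σ t • B t) t := by
    intro t
    have h1 := ((hdT t).add ((hdr t).smul (hdN t))).add ((hdρ t).smul (hdB t))
    have heq : e = fun s => ξ s + r s • N s + ρ s • B s := by
      funext s; rw [he s, hρap s]
    rw [heq]
    refine h1.congr_deriv ?_
    have hσt := hσ t
    match_scalars <;> linarith [hrk t, hρτ t, hσt]
  have hde1 : deriv e = fun t => σ t • B t := funext fun t => (he' t).deriv
  have hde1' : ∀ t, deriv e t = σ t • B t := fun t => (he' t).deriv
  have he'' : ∀ t, HasDerivAt (deriv e) (deriv σ t • B t + (-(σ t * τ t)) • N t) t := by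
    intro t
    rw [hde1]
    have h1 := (hdσ t).smul (hdB t)
    refine h1.congr_deriv ?_
    module
  have hde2 : deriv (deriv e) = fun t => deriv σ t • B t + (-(σ t * τ t)) • N t :=
    funext fun t => (he'' t).deriv
  have hde2' : ∀ t, deriv (deriv e) t = deriv σ t • B t + (-(σ t * τ t)) • N t :=
    fun t => (he'' t).deriv
  have hdστ : ∀ t, HasDerivAt (fun s => -(σ s * τ s))
      (-(deriv σ t * τ t + σ t * deriv τ t)) t := by
    intro t
    have := ((hdσ t).mul (hdτ t)).neg
    refine this.congr_deriv ?_
    try ring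
  have he''' : ∀ t, HasDerivAt (deriv (deriv e))
      ((σ t * τ t * k t) • T t
        + (-(deriv σ t * τ t + σ t * deriv τ t) + (-(τ t)) * deriv σ t) • N t
        + (deriv (deriv σ) t + (-(σ t * τ t)) * τ t) • B t) t := by
    intro t
    rw [hde2]
    have h1 := ((hdσ' t).smul (hdB t)).add ((hdστ t).smul (hdN t))
    refine h1.congr_deriv ?_
    match_scalars <;> ring
  -- pointwise quantities
  have hcross : ∀ t, cross3 (deriv e t) (deriv (deriv e) t) = (σ t ^ 2 * τ t) • T t := by
    intro t
    rw [hde2' t, hde1' t]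
    rw [cross3_smul_left, cross3_comb_right, cross3_self]
    have h1 : cross3 (B t) (N t) = (-1 : ℝ) • T t := by
      rw [hB t, cross3_triple_right, hTN t, hNN t]
      module
    rw [h1]
    module
  have he'n : ∀ t, ‖deriv e t‖ = |σ t| := by
    intro t
    rw [hde1' t]
    rw [norm_smul, hnB t, mul_one, Real.norm_eq_abs]
  have hcrossn : ∀ t, ‖cross3 (deriv e t) (deriv (deriv e) t)‖ = σ t ^ 2 * |τ t| := by
    intro t
    rw [hcross t, norm_smul, hunit t, mul_one, Real.norm_eq_abs, abs_mul,
      abs_of_nonneg (sq_nonneg (σ t))]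
  have hdet : ∀ t, det3 (deriv e t) (deriv (deriv e) t) (deriv (deriv (deriv e)) t)
      = σ t ^ 3 * τ t ^ 2 * k t := by
    intro t
    have hde3 := (he''' t).deriv
    rw [det3_eq, hcross t, hde3, real_inner_smul_left, inner_add_right, inner_add_right,
      real_inner_smul_right, real_inner_smul_right, real_inner_smul_right,
      hTT t, hTN t, hTB t]
    ring
  -- conclude
  constructor
  · apply intervalIntegral.integral_congr
    intro t ht
    rw [Set.uIcc_of_le hab] at ht
    have hσt : σ t ≠ 0 := hσne t ht
    have habs : |σ t| ≠ 0 := abs_ne_zero.2 hσt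
    simp only [hcrossn, he'n]
    field_simp
    rw [← sq_abs (σ t)]
    ring
  · apply intervalIntegral.integral_congr
    intro t ht
    rw [Set.uIcc_of_le hab] at ht
    have hσt : σ t ≠ 0 := hσne t ht
    simp only [hdet, hcrossn, he'n]
    rw [mul_pow, sq_abs]
    have h9 : σ t ^ 3 * τ t ^ 2 * k t / ((σ t ^ 2) ^ 2 * τ t ^ 2) = k t / σ t := by
      rw [div_eq_div_iff
        (mul_ne_zero (pow_ne_zero _ (pow_ne_zero _ hσt)) (pow_ne_zero _ (hτne t))) hσt]
      ring
    rw [h9]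
    rcases hσt.lt_or_gt with hneg | hpos
    · rw [abs_of_neg hneg, Real.sign_of_neg hneg, mul_neg, div_mul_cancel₀ _ hσt, neg_one_mul]
    · rw [abs_of_pos hpos, Real.sign_of_pos hpos, one_mul, div_mul_cancel₀ _ hσt]
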